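/- In the setting of the two reduction orders of R·S·T (with S·T = A·B, R·A = C·D, and R·S = G·H, H·T = I·J, G·I = K·L via the vector insertion algorithm), assume p ≥ 3, K_{p-1} = C_{p-1}, K_p = C_p = A_{p-1} < C_{p-1} + r_p, and S_{p-1} - G_{p-1} ≥ r_p. Prove that K_p = I_{p-1}. -/

import Mathlib

open Finset

/-- Partial sum `Φ_p = φ_1 + ⋯ + φ_p` of a multiplicity vector. -/
def PS (f : ℕ → ℕ) (p : ℕ) : ℕ := ∑ i ∈ Finset.Icc 1 p, f i

/-- Partial sums `X_p` of the bumped row in the vector insertion `W·Z = X·Y`: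
`X_0 = X_1 = 0`, `X_{p+1} = min(Z_p, X_p + w_{p+1})`. -/
def capX (W Z : ℕ → ℕ) : ℕ → ℕ
  | 0 => 0
  | p + 1 => if p = 0 then 0 else min (PS Z p) (capX W Z p + W (p + 1))

/-- Component `x_p = X_p - X_{p-1} = min(Z_{p-1} - X_{p-1}, w_p)` (with `x_1 = 0`). -/
def xcomp (W Z : ℕ → ℕ) (p : ℕ) : ℕ := capX W Z p - capX W Z (p - 1)

/-- Component `y_q = w_q + z_q - x_q`. -/
def ycomp (W Z : ℕ → ℕ) (q : ℕ) : ℕ := W q + Z q - xcomp W Z q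

/-- `A` from `S·T = A·B`. -/
def rowA (S T : ℕ → ℕ) : ℕ → ℕ := xcomp S T
/-- `B` from `S·T = A·B`. -/
def rowB (S T : ℕ → ℕ) : ℕ → ℕ := ycomp S T
/-- `C` from `R·A = C·D`. -/
def rowC (R S T : ℕ → ℕ) : ℕ → ℕ := xcomp R (rowA S T)
/-- `D` from `R·A = C·D`. -/
def rowD (R S T : ℕ → ℕ) : ℕ → ℕ := ycomp R (rowA S T)
/-- `E` from `D·B = E·F`. -/
def rowE (R S T : ℕ → ℕ) : ℕ → ℕ := xcomp (rowD R S T) (rowB S T)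
/-- `F` from `D·B = E·F`. -/
def rowF (R S T : ℕ → ℕ) : ℕ → ℕ := ycomp (rowD R S T) (rowB S T)
/-- `G` from `R·S = G·H`. -/
def rowG (R S : ℕ → ℕ) : ℕ → ℕ := xcomp R S
/-- `H` from `R·S = G·H`. -/
def rowH (R S : ℕ → ℕ) : ℕ → ℕ := ycomp R S
/-- `I` from `H·T = I·J`. -/
def rowI (R S T : ℕ → ℕ) : ℕ → ℕ := xcomp (rowH R S) T
/-- `J` from `H·T = I·J`. -/
def rowJ (R S T : ℕ → ℕ) : ℕ → ℕ := ycomp (rowH R S) T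
/-- `K` from `G·I = K·L`. -/
def rowK (R S T : ℕ → ℕ) : ℕ → ℕ := xcomp (rowG R S) (rowI R S T)
/-- `L` from `G·I = K·L`. -/
def rowL (R S T : ℕ → ℕ) : ℕ → ℕ := ycomp (rowG R S) (rowI R S T)

/-! With `g_p = r_p` (forced by `S_{p-1} - G_{p-1} ≥ r_p`) and `K_{p-1} = C_{p-1}`, the recursion
`K_p = min(I_{p-1}, K_{p-1} + g_p)` reads `K_p = min(I_{p-1}, C_{p-1} + r_p)`. Since
`K_p = A_{p-1} < C_{p-1} + r_p`, the minimum is not attained by the second argument, so it is `I_{p-1}`. -/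

section VectorInsertion

variable (W Z : ℕ → ℕ)

lemma PS_mono (f : ℕ → ℕ) {p q : ℕ} (h : p ≤ q) : PS f p ≤ PS f q :=
  sum_le_sum_of_subset (Icc_subset_Icc_right h)

lemma capX_succ {p : ℕ} (hp : p ≠ 0) :
    capX W Z (p + 1) = min (PS Z p) (capX W Z p + W (p + 1)) := by
  rw [capX, if_neg hp]

lemma capX_le_PS (p : ℕ) : capX W Z p ≤ PS Z p := by
  induction p with
  | zero => simp [capX]
  | succ q ih =>
    rcases eq_or_ne q 0 with rfl | hq
    · simp [capX]
    · rw [capX_succ W Z hq]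
      exact (min_le_left _ _).trans (PS_mono Z q.le_succ)

lemma capX_le_capX_succ (p : ℕ) : capX W Z p ≤ capX W Z (p + 1) := by
  rcases eq_or_ne p 0 with rfl | hp
  · simp [capX]
  · rw [capX_succ W Z hp]
    exact le_min (capX_le_PS W Z p) le_self_add

lemma PS_xcomp (p : ℕ) : PS (xcomp W Z) p = capX W Z p := by
  induction p with
  | zero => simp [PS, capX]
  | succ q ih =>
    rw [PS, sum_Icc_succ_top (Nat.succ_pos q), ← PS, ih, xcomp, Nat.add_sub_cancel,
      Nat.add_sub_cancel' (capX_le_capX_succ W Z q)]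

lemma xcomp_succ_of_le {p : ℕ} (hp : p ≠ 0) (h : capX W Z p + W (p + 1) ≤ PS Z p) :
    xcomp W Z (p + 1) = W (p + 1) := by
  rw [xcomp, capX_succ W Z hp, min_eq_right h, Nat.add_sub_cancel, Nat.add_sub_cancel_left]

lemma capX_succ_of_lt {p : ℕ} (hp : p ≠ 0) (h : capX W Z (p + 1) < capX W Z p + W (p + 1)) :
    capX W Z (p + 1) = PS Z p := by
  rw [capX_succ W Z hp] at h ⊢
  exact min_eq_left (not_lt.mp fun h' => h.ne (min_eq_right h'.le))

end VectorInsertion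

theorem K_eq_I_general (p : ℕ) (R S T : ℕ → ℕ) (hp : 3 ≤ p)
    (h1 : PS (rowK R S T) (p - 1) = PS (rowC R S T) (p - 1))
    (h2 : PS (rowK R S T) p = PS (rowC R S T) p)
    (h3 : PS (rowC R S T) p = PS (rowA S T) (p - 1))
    (h4 : PS (rowA S T) (p - 1) < PS (rowC R S T) (p - 1) + R p)
    (h5 : PS (rowG R S) (p - 1) + R p ≤ PS S (p - 1)) :
    PS (rowK R S T) p = PS (rowI R S T) (p - 1) := by
  obtain ⟨q, rfl⟩ : ∃ q, p = q + 1 := ⟨p - 1, by omega⟩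
  have hq : q ≠ 0 := by omega
  simp only [Nat.add_sub_cancel] at h1 h4 h5 ⊢
  rw [rowG, PS_xcomp] at h5
  have hg : rowG R S (q + 1) = R (q + 1) := xcomp_succ_of_le R S hq h5
  rw [rowK, PS_xcomp] at h1 h2 ⊢
  apply capX_succ_of_lt _ _ hq
  rw [hg, h1, h2, h3]
  exact h4

/-- If `p ≥ 3`, `K_{p-1} = C_{p-1}`, `K_p = C_p = A_{p-1} < C_{p-1} + r_p` and
`S_{p-1} - G_{p-1} ≥ r_p`, then `K_p = I_{p-1}`. -/
theorem K_eq_I (n p : ℕ) (R S T : ℕ → ℕ) (hp : 3 ≤ p) (hpn : p ≤ n)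
    (h1 : PS (rowK R S T) (p - 1) = PS (rowC R S T) (p - 1))
    (h2 : PS (rowK R S T) p = PS (rowC R S T) p)
    (h3 : PS (rowC R S T) p = PS (rowA S T) (p - 1))
    (h4 : PS (rowA S T) (p - 1) < PS (rowC R S T) (p - 1) + R p)
    (h5 : PS (rowG R S) (p - 1) + R p ≤ PS S (p - 1)) :
    PS (rowK R S T) p = PS (rowI R S T) (p - 1) :=
  K_eq_I_general p R S T hp h1 h2 h3 h4 h5
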